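/- For every n ∈ ℤ, the extremal length with totally real boundary values of a₁ⁿ and of a₂ⁿ is zero: λ_tr(a₁ⁿ) = 0 and λ_tr(a₂ⁿ) = 0. -/

import Mathlib

open Complex unitInterval

attribute [local instance] Path.Homotopic.setoid

/-- The twice punctured plane `ℂ \ {−1, 1}`. -/
abbrev TwicePunctured : Type := ({-1, 1}ᶜ : Set ℂ)

/-- The base point `0` of `ℂ \ {−1, 1}`. -/
def puncturedBase : TwicePunctured := ⟨0, by norm_num⟩

/-- A loop in `ℂ \ {−1,1}` based at `0` as an element of the fundamental group. -/
noncomputable def fromLoopT (γ : Path puncturedBase puncturedBase) :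
    FundamentalGroup TwicePunctured puncturedBase :=
  FundamentalGroup.fromPath (X := TopCat.of TwicePunctured) ⟦γ⟧

/-- The loop `α₁(t) = −1 + e^{2πit}` surrounding `−1` counterclockwise. -/
noncomputable def loopOne : Path puncturedBase puncturedBase where
  toFun t :=
    ⟨-1 + Complex.exp (((2 * Real.pi * (t : ℝ) : ℝ) : ℂ) * Complex.I), by
      have habs := Complex.norm_exp_ofReal_mul_I (2 * Real.pi * (t : ℝ))
      have hne := Complex.exp_ne_zero (((2 * Real.pi * (t : ℝ) : ℝ) : ℂ) * Complex.I)
      simp only [Set.mem_compl_iff, Set.mem_insert_iff, Set.mem_singleton_iff]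
      push_neg
      constructor
      · intro h; exact hne (by linear_combination h)
      · intro h
        have h2 : Complex.exp (((2 * Real.pi * (t : ℝ) : ℝ) : ℂ) * Complex.I) = 2 := by
          linear_combination h
        rw [h2] at habs
        simp at habs⟩
  continuous_toFun := by fun_prop
  source' := by
    ext : 1
    simp [puncturedBase]
  target' := by
    ext : 1
    simp [puncturedBase, Complex.exp_two_pi_mul_I]

/-- The loop `α₂(t) = 1 − e^{2πit}` surrounding `1` counterclockwise. -/
noncomputable def loopTwo : Path puncturedBase puncturedBase where
  toFun t :=
    ⟨1 - Complex.exp (((2 * Real.pi * (t : ℝ) : ℝ) : ℂ) * Complex.I), by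
      have habs := Complex.norm_exp_ofReal_mul_I (2 * Real.pi * (t : ℝ))
      have hne := Complex.exp_ne_zero (((2 * Real.pi * (t : ℝ) : ℝ) : ℂ) * Complex.I)
      simp only [Set.mem_compl_iff, Set.mem_insert_iff, Set.mem_singleton_iff]
      push_neg
      constructor
      · intro h
        have h2 : Complex.exp (((2 * Real.pi * (t : ℝ) : ℝ) : ℂ) * Complex.I) = 2 := by
          linear_combination -h
        rw [h2] at habs
        simp at habs
      · intro h; exact hne (by linear_combination -h)⟩
  continuous_toFun := by fun_prop
  source' := by
    ext : 1
    simp [puncturedBase]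
  target' := by
    ext : 1
    simp [puncturedBase, Complex.exp_two_pi_mul_I]

/-- The generator `a₁` of `π₁(ℂ \ {−1,1}, 0)`. -/
noncomputable def genOne : FundamentalGroup TwicePunctured puncturedBase := fromLoopT loopOne

/-- The generator `a₂` of `π₁(ℂ \ {−1,1}, 0)`. -/
noncomputable def genTwo : FundamentalGroup TwicePunctured puncturedBase := fromLoopT loopTwo

/-- `gen false = a₁`, `gen true = a₂`. -/
noncomputable def gen (b : Bool) : FundamentalGroup TwicePunctured puncturedBase :=
  if b then genTwo else genOne

/-- A word `a_{i₁}^{n₁} ⋯ a_{i_m}^{n_m}` is encoded as a list of pairs (generator, exponent);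
it is reduced when all exponents are nonzero and consecutive generators differ. -/
def ReducedWord (l : List (Bool × ℤ)) : Prop :=
  (∀ p ∈ l, p.2 ≠ 0) ∧ l.Chain' (fun p q => p.1 ≠ q.1)

/-- The element of `π₁(ℂ \ {−1,1}, 0)` represented by a word. -/
noncomputable def wordProd (l : List (Bool × ℤ)) :
    FundamentalGroup TwicePunctured puncturedBase :=
  (l.map fun p => gen p.1 ^ p.2).prod

/-- The syllable decomposition of a reduced word: consecutive terms are grouped together
exactly when they carry the same exponent equal to `+1` or `−1`; each term with exponent of
absolute value at least `2` is its own syllable, and remaining terms are singletons. -/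
def syllables : List (Bool × ℤ) → List (List (Bool × ℤ))
  | [] => []
  | p :: rest =>
    match syllables rest with
    | (q :: s) :: ss =>
      if p.2 = q.2 ∧ (p.2 = 1 ∨ p.2 = -1) then (p :: q :: s) :: ss
      else [p] :: (q :: s) :: ss
    | ss => [p] :: ss

/-- The degree of a syllable: the sum of the absolute values of the exponents of its terms. -/
def syllableDegree (s : List (Bool × ℤ)) : ℤ := (s.map fun p => |p.2|).sum

/-- `Λ(w) = Σ_{syllables of w} log(1 + deg(syllable))`. -/
noncomputable def LambdaWord (l : List (Bool × ℤ)) : ℝ :=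
  ((syllables l).map fun s => Real.log (1 + (syllableDegree s : ℝ))).sum

/-- The totally real boundary set: the interval `(−1,1)` of the real axis. -/
def trSet : Set ℂ := {z : ℂ | z.im = 0 ∧ -1 < z.re ∧ z.re < 1}

/-- The perpendicular bisector boundary set: the imaginary axis `iℝ`. -/
def pbSet : Set ℂ := {z : ℂ | z.re = 0}

/-- The open axis-parallel rectangle `{z : x₁ < Re z < x₂, y₁ < Im z < y₂}`. -/
def openRect (x₁ x₂ y₁ y₂ : ℝ) : Set ℂ :=
  {z : ℂ | x₁ < z.re ∧ z.re < x₂ ∧ y₁ < z.im ∧ z.im < y₂}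

/-- A side function `g : I → ℂ` (with values in `ℂ \ {−1,1}` and endpoints in `B`)
represents `w` if it is homotopic, through curves in `ℂ \ {−1,1}` whose endpoints stay
in `B`, to a loop based at `0` whose class is `w`. -/
def SideRepresents (B : Set ℂ) (w : FundamentalGroup TwicePunctured puncturedBase)
    (g : I → ℂ) : Prop :=
  ∃ γ : Path puncturedBase puncturedBase, fromLoopT γ = w ∧
    ∃ H : I × I → ℂ, Continuous H ∧
      (∀ p : I × I, H p ∈ ({-1, 1}ᶜ : Set ℂ)) ∧
      (∀ t : I, H (0, t) = g t) ∧ (∀ t : I, H (1, t) = (γ t : ℂ)) ∧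
      (∀ s : I, H (s, 0) ∈ B) ∧ (∀ s : I, H (s, 1) ∈ B)

/-- A map, continuous on the closed rectangle, holomorphic inside, with values in
`ℂ \ {−1,1}`, represents `w` with boundary values in `B` if it maps the horizontal sides
into `B` and each vertical side, as a curve with endpoints in `B`, represents `w`. -/
def RepresentsOnRect (B : Set ℂ) (w : FundamentalGroup TwicePunctured puncturedBase)
    (x₁ x₂ y₁ y₂ : ℝ) : Prop :=
  ∃ f : ℂ → ℂ,
    ContinuousOn f (closure (openRect x₁ x₂ y₁ y₂)) ∧
    DifferentiableOn ℂ f (openRect x₁ x₂ y₁ y₂) ∧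
    (∀ z ∈ closure (openRect x₁ x₂ y₁ y₂), f z ∈ ({-1, 1}ᶜ : Set ℂ)) ∧
    (∀ x ∈ Set.Icc x₁ x₂,
      f ((x : ℂ) + (y₁ : ℂ) * Complex.I) ∈ B ∧ f ((x : ℂ) + (y₂ : ℂ) * Complex.I) ∈ B) ∧
    SideRepresents B w (fun t => f ((x₁ : ℂ) + ((y₁ + (t : ℝ) * (y₂ - y₁) : ℝ) : ℂ) * Complex.I)) ∧
    SideRepresents B w (fun t => f ((x₂ : ℂ) + ((y₁ + (t : ℝ) * (y₂ - y₁) : ℝ) : ℂ) * Complex.I))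

/-- The extremal length of `w` with boundary values in `B`: the infimum of the extremal
lengths `(y₂−y₁)/(x₂−x₁)` of rectangles admitting a representing map. -/
noncomputable def extremalLength (B : Set ℂ)
    (w : FundamentalGroup TwicePunctured puncturedBase) : ℝ :=
  sInf {l : ℝ | ∃ x₁ x₂ y₁ y₂ : ℝ, x₁ < x₂ ∧ y₁ < y₂ ∧
    l = (y₂ - y₁) / (x₂ - x₁) ∧ RepresentsOnRect B w x₁ x₂ y₁ y₂}

/-- `λ_tr`, the extremal length with totally real boundary values. -/
noncomputable def lambdaTR (w : FundamentalGroup TwicePunctured puncturedBase) : ℝ :=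
  extremalLength trSet w

/-- `λ_pb`, the extremal length with perpendicular bisector boundary values. -/
noncomputable def lambdaPB (w : FundamentalGroup TwicePunctured puncturedBase) : ℝ :=
  extremalLength pbSet w

/-!
The map `z ↦ q - q·exp(2π(n z - |n| b))`, for a puncture `q ∈ {±1}`, is holomorphic on the
rectangle `[0, b] × [0, 1]`, stays within distance `1` of `q` there and so avoids `±1`, is real on
the horizontal sides (where `exp(2πi n y) = 1`), and winds each vertical side `n` times around `q`
on a circle of radius at most `1`. Scaling that radius to `1` is a homotopy with endpoints in
`(-1, 1)` onto the `n`-fold circle around `q` through `0`, whose class is `a^n` for the generator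
`a` around `q`: loops of the form `t ↦ p (θ t)` with `p` periodic are compared by moving `θ`
within the simply connected line. So `λ_tr(a^n) ≤ 1 / b` for every `b > 0`.
-/

open scoped Real

theorem Path.homotopic_of_factor {X Y : Type*} [TopologicalSpace X] [TopologicalSpace Y]
    [SimplyConnectedSpace Y] {x y : X} {a b : Y} (p : C(Y, X)) (θ₀ θ₁ : Path a b)
    {γ₀ γ₁ : Path x y} (h₀ : ∀ t, γ₀ t = p (θ₀ t)) (h₁ : ∀ t, γ₁ t = p (θ₁ t)) :
    γ₀.Homotopic γ₁ := by
  have hx : x = p a := by simpa using h₀ 0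
  have hy : y = p b := by simpa using h₀ 1
  have e₀ : γ₀ = (θ₀.map p.continuous).cast hx hy := by ext t; simp [h₀]
  have e₁ : γ₁ = (θ₁.map p.continuous).cast hx hy := by ext t; simp [h₁]
  rw [e₀, e₁]
  exact ((SimplyConnectedSpace.paths_homotopic θ₀ θ₁).map p).pathCast hx hy

section PeriodicLoop

variable {X : Type*} [TopologicalSpace X] {x : X} (p : C(ℝ, X)) (hp : Function.Periodic p 1)
  (hx : p 0 = x)

def periodicLoop (n : ℤ) : Path x x where
  toFun t := p (n * t)
  source' := by simpa using hx
  target' := by rw [Set.Icc.coe_one, hp.int_mul_eq, hx]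

@[simp]
theorem periodicLoop_apply (n : ℤ) (t : I) : periodicLoop p hp hx n t = p (n * t) := rfl

theorem periodicLoop_add_homotopic (m k : ℤ) :
    (periodicLoop p hp hx (m + k)).Homotopic
      ((periodicLoop p hp hx m).trans (periodicLoop p hp hx k)) := by
  refine Path.homotopic_of_factor p (Path.segment (0 : ℝ) (m + k))
    ((Path.segment (0 : ℝ) m).trans (Path.segment (m : ℝ) (m + k))) (fun t => ?_) (fun t => ?_)
  · simp only [periodicLoop_apply, Path.segment_apply, AffineMap.lineMap_apply_ring']
    push_cast
    ring_nf
  · rw [Path.trans_apply, Path.trans_apply]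
    split_ifs
    · simp only [periodicLoop_apply, Path.segment_apply, AffineMap.lineMap_apply_ring']
      ring_nf
    · simp only [periodicLoop_apply, Path.segment_apply, AffineMap.lineMap_apply_ring']
      rw [← hp.int_mul m (k * (2 * t - 1))]
      ring_nf

theorem FundamentalGroup.fromPath_periodicLoop (n : ℤ) :
    FundamentalGroup.fromPath (X := X) ⟦periodicLoop p hp hx n⟧ =
      FundamentalGroup.fromPath ⟦periodicLoop p hp hx 1⟧ ^ n := by
  let φ : Multiplicative ℤ →* FundamentalGroup X x :=
    MonoidHom.mk' (fun m => FundamentalGroup.fromPath ⟦periodicLoop p hp hx m.toAdd⟧)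
      fun a b => by
        rw [FundamentalGroup.mul_def, toAdd_mul, add_comm]
        exact Quotient.sound (periodicLoop_add_homotopic p hp hx _ _)
  simpa [φ, ← ofAdd_zsmul] using φ.map_zpow (Multiplicative.ofAdd 1) n

end PeriodicLoop

theorem sub_mul_mem_twicePunctured {q w : ℂ} (hq : q = 1 ∨ q = -1) (hw₀ : 0 < ‖w‖)
    (hw₂ : ‖w‖ < 2) : q - q * w ∈ ({-1, 1}ᶜ : Set ℂ) := by
  have hw₀ : w ≠ 0 := norm_pos_iff.mp hw₀
  have hw₂ : w ≠ 2 := by rintro rfl; norm_num at hw₂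
  simp only [Set.mem_compl_iff, Set.mem_insert_iff, Set.mem_singleton_iff, not_or]
  rcases hq with rfl | rfl
  · exact ⟨fun h => hw₂ (by linear_combination -h), fun h => hw₀ (by linear_combination -h)⟩
  · exact ⟨fun h => hw₀ (by linear_combination h), fun h => hw₂ (by linear_combination h)⟩

theorem sub_mul_ofReal_mul_exp_mem_twicePunctured {q : ℂ} (hq : q = 1 ∨ q = -1) {ρ : ℝ}
    (hρ₀ : 0 < ρ) (hρ₂ : ρ < 2) (n : ℤ) (y : ℝ) :
    q - q * (ρ * Complex.exp (2 * π * (n * y) * Complex.I)) ∈ ({-1, 1}ᶜ : Set ℂ) := by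
  have hnorm : ‖(ρ : ℂ) * Complex.exp (2 * π * (n * y) * Complex.I)‖ = ρ := by
    rw [norm_mul, Complex.norm_real, Complex.norm_exp]
    simp [abs_of_pos hρ₀]
  exact sub_mul_mem_twicePunctured hq (by rwa [hnorm]) (by rwa [hnorm])

theorem sub_mul_ofReal_mem_trSet {q : ℂ} (hq : q = 1 ∨ q = -1) {ρ : ℝ} (hρ₀ : 0 < ρ)
    (hρ₂ : ρ < 2) : q - q * ρ ∈ trSet := by
  rcases hq with rfl | rfl <;> refine ⟨by simp, ?_, ?_⟩ <;> simp <;> linarith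

noncomputable def circleAround (q : ℂ) (hq : q = 1 ∨ q = -1) : C(ℝ, TwicePunctured) where
  toFun t := ⟨q - q * Complex.exp (2 * π * t * Complex.I),
    sub_mul_mem_twicePunctured hq (by simp [Complex.norm_exp]) (by simp [Complex.norm_exp])⟩

@[simp]
theorem coe_circleAround (q : ℂ) (hq : q = 1 ∨ q = -1) (t : ℝ) :
    (circleAround q hq t : ℂ) = q - q * Complex.exp (2 * π * t * Complex.I) := rfl

theorem circleAround_periodic (q : ℂ) (hq : q = 1 ∨ q = -1) :
    Function.Periodic (circleAround q hq) 1 := by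
  intro t
  ext1
  simp [add_mul, mul_add, Complex.exp_add]

theorem circleAround_zero (q : ℂ) (hq : q = 1 ∨ q = -1) :
    circleAround q hq 0 = puncturedBase := by
  ext1
  simp [puncturedBase]

noncomputable abbrev circleLoop (q : ℂ) (hq : q = 1 ∨ q = -1) (n : ℤ) :
    Path puncturedBase puncturedBase :=
  periodicLoop (circleAround q hq) (circleAround_periodic q hq) (circleAround_zero q hq) n

theorem fromLoopT_circleLoop (q : ℂ) (hq : q = 1 ∨ q = -1) (n : ℤ) :
    fromLoopT (circleLoop q hq n) = fromLoopT (circleLoop q hq 1) ^ n :=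
  FundamentalGroup.fromPath_periodicLoop _ _ _ n

theorem genOne_zpow (n : ℤ) : genOne ^ n = fromLoopT (circleLoop (-1) (Or.inr rfl) n) := by
  have : loopOne = circleLoop (-1) (Or.inr rfl) 1 := by ext t; simp [loopOne]
  rw [genOne, this, fromLoopT_circleLoop _ _ n]

theorem genTwo_zpow (n : ℤ) : genTwo ^ n = fromLoopT (circleLoop 1 (Or.inl rfl) n) := by
  have : loopTwo = circleLoop 1 (Or.inl rfl) 1 := by ext t; simp [loopTwo]
  rw [genTwo, this, fromLoopT_circleLoop _ _ n]

theorem sideRepresents_circleLoop {q : ℂ} (hq : q = 1 ∨ q = -1) (n : ℤ) {r : ℝ}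
    (hr₀ : 0 < r) (hr₂ : r < 2) :
    SideRepresents trSet (fromLoopT (circleLoop q hq n))
      (fun t => q - q * (r * Complex.exp (2 * π * (n * t) * Complex.I))) := by
  have hρ : ∀ s : I, 0 < (1 - s) * r + s ∧ (1 - s) * r + s < 2 := fun s => by
    constructor <;> nlinarith [s.2.1, s.2.2]
  have hexp_int : Complex.exp (2 * π * n * Complex.I) = 1 := by
    rw [← Complex.exp_int_mul_two_pi_mul_I n]; ring_nf
  refine ⟨_, rfl, fun st => q - q * (((1 - st.1) * r + st.1 : ℝ) *
      Complex.exp (2 * π * (n * st.2) * Complex.I)), by fun_prop, fun st => ?_, fun t => ?_,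
    fun t => ?_, fun s => ?_, fun s => ?_⟩
  · exact sub_mul_ofReal_mul_exp_mem_twicePunctured hq (hρ st.1).1 (hρ st.1).2 n st.2
  · simp
  · simp
  · simpa using sub_mul_ofReal_mem_trSet hq (hρ s).1 (hρ s).2
  · simpa [hexp_int] using sub_mul_ofReal_mem_trSet hq (hρ s).1 (hρ s).2

noncomputable def rectMap (q : ℂ) (n : ℤ) (b : ℝ) (z : ℂ) : ℂ :=
  q - q * Complex.exp (2 * π * (n * z - (|(n : ℝ)| * b : ℝ)))

theorem rectMap_add_mul_I (q : ℂ) (n : ℤ) (b x y : ℝ) :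
    rectMap q n b (x + y * Complex.I) =
      q - q * (Real.exp (2 * π * (n * x - |(n : ℝ)| * b)) *
        Complex.exp (2 * π * (n * y) * Complex.I)) := by
  rw [rectMap, Complex.ofReal_exp, ← Complex.exp_add]
  push_cast
  ring_nf

theorem exp_two_pi_mul_sub_le_one (n : ℤ) {b x : ℝ} (hx : x ∈ Set.Icc 0 b) :
    Real.exp (2 * π * (n * x - |(n : ℝ)| * b)) ≤ 1 := by
  have : (n : ℝ) * x ≤ |(n : ℝ)| * b :=
    calc (n : ℝ) * x ≤ |(n : ℝ)| * x := mul_le_mul_of_nonneg_right (le_abs_self _) hx.1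
      _ ≤ |(n : ℝ)| * b := mul_le_mul_of_nonneg_left hx.2 (abs_nonneg _)
  exact Real.exp_le_one_iff.2 (by nlinarith [Real.pi_pos])

theorem representsOnRect_circleLoop {q : ℂ} (hq : q = 1 ∨ q = -1) (n : ℤ) {b : ℝ}
    (hb : 0 < b) : RepresentsOnRect trSet (fromLoopT (circleLoop q hq n)) 0 b 0 1 := by
  have hr : ∀ x ∈ Set.Icc 0 b, 0 < Real.exp (2 * π * (n * x - |(n : ℝ)| * b)) ∧
      Real.exp (2 * π * (n * x - |(n : ℝ)| * b)) < 2 := fun x hx =>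
    ⟨Real.exp_pos _, (exp_two_pi_mul_sub_le_one n hx).trans_lt one_lt_two⟩
  have hclosure : ∀ z ∈ closure (openRect 0 b 0 1), z.re ∈ Set.Icc 0 b := fun z hz =>
    closure_minimal (t := Complex.re ⁻¹' Set.Icc 0 b) (fun w hw => ⟨hw.1.le, hw.2.1.le⟩)
      (isClosed_Icc.preimage Complex.continuous_re) hz
  have hexp_int : Complex.exp (2 * π * (n * (1 : ℝ)) * Complex.I) = 1 := by
    rw [← Complex.exp_int_mul_two_pi_mul_I n]; push_cast; ring_nf
  refine ⟨rectMap q n b, by unfold rectMap; fun_prop, by unfold rectMap; fun_prop,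
    fun z hz => ?_, fun x hx => ?_, ?_, ?_⟩
  · obtain ⟨h₀, h₂⟩ := hr _ (hclosure z hz)
    rw [← Complex.re_add_im z, rectMap_add_mul_I]
    exact sub_mul_ofReal_mul_exp_mem_twicePunctured hq h₀ h₂ n z.im
  · obtain ⟨h₀, h₂⟩ := hr x hx
    rw [rectMap_add_mul_I, rectMap_add_mul_I, hexp_int]
    simp only [Complex.ofReal_zero, mul_zero, zero_mul, Complex.exp_zero, mul_one]
    exact ⟨sub_mul_ofReal_mem_trSet hq h₀ h₂, sub_mul_ofReal_mem_trSet hq h₀ h₂⟩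
  · convert sideRepresents_circleLoop hq n (hr 0 ⟨le_rfl, hb.le⟩).1 (hr 0 ⟨le_rfl, hb.le⟩).2
      using 2 with t
    rw [rectMap_add_mul_I, zero_add, sub_zero, mul_one]
  · convert sideRepresents_circleLoop hq n (hr b ⟨hb.le, le_rfl⟩).1 (hr b ⟨hb.le, le_rfl⟩).2
      using 2 with t
    rw [rectMap_add_mul_I, zero_add, sub_zero, mul_one]

theorem extremalLength_eq_zero_of_forall_representsOnRect {B : Set ℂ}
    {w : FundamentalGroup TwicePunctured puncturedBase}
    (h : ∀ b : ℝ, 0 < b → RepresentsOnRect B w 0 b 0 1) : extremalLength B w = 0 := by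
  unfold extremalLength
  set S := {l : ℝ | ∃ x₁ x₂ y₁ y₂ : ℝ, x₁ < x₂ ∧ y₁ < y₂ ∧
      l = (y₂ - y₁) / (x₂ - x₁) ∧ RepresentsOnRect B w x₁ x₂ y₁ y₂}
  have hnonneg : ∀ l ∈ S, 0 ≤ l := by
    rintro _ ⟨x₁, x₂, y₁, y₂, hx, hy, rfl, -⟩
    exact div_nonneg (sub_nonneg.2 hy.le) (sub_nonneg.2 hx.le)
  refine le_antisymm (le_of_forall_pos_le_add fun δ hδ => ?_) (Real.sInf_nonneg hnonneg)
  rw [zero_add]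
  exact csInf_le ⟨0, hnonneg⟩ ⟨0, δ⁻¹, 0, 1, inv_pos.2 hδ, one_pos, by simp, h _ (inv_pos.2 hδ)⟩

theorem lambdaTR_circleLoop_eq_zero {q : ℂ} (hq : q = 1 ∨ q = -1) (n : ℤ) :
    lambdaTR (fromLoopT (circleLoop q hq n)) = 0 :=
  extremalLength_eq_zero_of_forall_representsOnRect fun _ hb =>
    representsOnRect_circleLoop hq n hb

/-- Theorem 1(1), exceptional cases: `λ_tr(a₁ⁿ) = 0` and `λ_tr(a₂ⁿ) = 0` for every `n ∈ ℤ`. -/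
theorem lambdaTR_pow_gen_eq_zero (n : ℤ) :
    lambdaTR (genOne ^ n) = 0 ∧ lambdaTR (genTwo ^ n) = 0 := by
  rw [genOne_zpow, genTwo_zpow]
  exact ⟨lambdaTR_circleLoop_eq_zero _ n, lambdaTR_circleLoop_eq_zero _ n⟩
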